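/- Let D₁ : X₁ → Y₁ and D₂ : X₂ → Y₂ be Fredholm operators between Banach spaces, let V be a finite-dimensional Banach space, and let e₁ : X₁ → V, e₂ : X₂ → V be bounded linear maps (evaluation maps). Define X := {(ξ₁, ξ₂) ∈ X₁ × X₂ : e₁ξ₁ = e₂ξ₂} and D : X → Y₁ × Y₂ by D(ξ₁,ξ₂) = (D₁ξ₁, D₂ξ₂). Then D is a Fredholm operator. -/

import Mathlib

/-!
In Banach spaces, a bounded operator whose range has finite codimension automatically has closed
range: the injective operator it induces on `X ⧸ ker f`, together with a finite-dimensional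
complement of its range, gives an isomorphism onto the target by the open mapping theorem.
So being Fredholm reduces to finiteness of kernel and cokernel, which is stable under composition
and products. The operator in question is `(D₁ × D₂) ∘ ι`, where `ι` is the inclusion of the
closed subspace `ker (e₁ ∘ fst - e₂ ∘ snd)`, of codimension at most `dim V`.
-/
def IsFredholm {X Y : Type*} [NormedAddCommGroup X] [NormedSpace ℝ X]
    [NormedAddCommGroup Y] [NormedSpace ℝ Y] (D : X →L[ℝ] Y) : Prop :=
  IsClosed (LinearMap.range (D : X →ₗ[ℝ] Y) : Set Y) ∧
  FiniteDimensional ℝ (LinearMap.ker (D : X →ₗ[ℝ] Y)) ∧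
  FiniteDimensional ℝ (Y ⧸ LinearMap.range (D : X →ₗ[ℝ] Y))

namespace Submodule

theorem CoFG.prod {R M N : Type*} [Ring R] [AddCommGroup M] [Module R M] [AddCommGroup N]
    [Module R N] {S : Submodule R M} {T : Submodule R N} (hS : S.CoFG) (hT : T.CoFG) :
    (S.prod T).CoFG := by
  have hsurj : Function.Surjective (S.mkQ.prodMap T.mkQ) :=
    Prod.map_surjective.mpr ⟨S.mkQ_surjective, T.mkQ_surjective⟩
  have hker : LinearMap.ker (S.mkQ.prodMap T.mkQ) = S.prod T := by
    rw [LinearMap.ker_prodMap, ker_mkQ, ker_mkQ]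
  rw [← hker]
  exact .equiv ((S.mkQ.prodMap T.mkQ).quotKerEquivOfSurjective hsurj).symm

end Submodule

namespace LinearMap

theorem ker_comp_fg {R M N P : Type*} [Ring R] [IsNoetherianRing R] [AddCommGroup M] [Module R M]
    [AddCommGroup N] [Module R N] [AddCommGroup P] [Module R P] {f : M →ₗ[R] N} {g : N →ₗ[R] P}
    (hf : (ker f).FG) (hg : (ker g).FG) : (ker (g ∘ₗ f)).FG := by
  refine Submodule.fg_of_fg_map_of_fg_inf_ker f (hg.of_le ?_) (hf.of_le inf_le_right)
  rw [ker_comp]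
  exact Submodule.map_comap_le f (ker g)

theorem range_comp_cofg {K M N P : Type*} [DivisionRing K] [AddCommGroup M] [Module K M]
    [AddCommGroup N] [Module K N] [AddCommGroup P] [Module K P] {f : M →ₗ[K] N} {g : N →ₗ[K] P}
    (hf : (range f).CoFG) (hg : (range g).CoFG) : (range (g ∘ₗ f)).CoFG := by
  obtain ⟨t, ht⟩ := (range f).exists_isCompl
  obtain ⟨u, hu⟩ := (range g).exists_isCompl
  refine Submodule.FG.cofg_of_codisjoint (S := t.map g ⊔ u) ?_
    (((hf.fg_of_isCompl ht).map g).sup (hg.fg_of_isCompl hu))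
  rw [codisjoint_iff, range_comp, sup_comm, ← sup_assoc, ← Submodule.map_sup, ht.sup_eq_top,
    Submodule.map_top, hu.sup_eq_top]

end LinearMap

theorem ContinuousLinearMap.isClosed_range_of_cofg {𝕜 X Y : Type*} [NontriviallyNormedField 𝕜]
    [CompleteSpace 𝕜] [NormedAddCommGroup X] [NormedSpace 𝕜 X] [CompleteSpace X]
    [NormedAddCommGroup Y] [NormedSpace 𝕜 Y] [CompleteSpace Y]
    (f : X →L[𝕜] Y) (hf : (LinearMap.range (f : X →ₗ[𝕜] Y)).CoFG) :
    IsClosed (LinearMap.range (f : X →ₗ[𝕜] Y) : Set Y) := by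
  obtain ⟨G, hG⟩ := (LinearMap.range (f : X →ₗ[𝕜] Y)).exists_isCompl
  have : FiniteDimensional 𝕜 G := .of_fg (hf.fg_of_isCompl hG)
  have : IsClosed (f.ker : Set X) := f.isClosed_ker
  let f' := f.ker.liftQL f le_rfl
  have hrange : f'.range = LinearMap.range (f : X →ₗ[𝕜] Y) := Submodule.range_liftQ _ _ _
  have hker : f'.ker = ⊥ := Submodule.ker_liftQ_eq_bot _ _ _ le_rfl
  rw [← hrange] at hG ⊢
  exact f'.closed_complemented_range_of_isCompl_of_ker_eq_bot G hG G.closed_of_finiteDimensional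
    hker

section Fredholm

variable {X Y Z : Type*} [NormedAddCommGroup X] [NormedSpace ℝ X]
  [NormedAddCommGroup Y] [NormedSpace ℝ Y] [NormedAddCommGroup Z] [NormedSpace ℝ Z]

theorem IsFredholm.of_finiteDimensional_ker_of_cofg [CompleteSpace X] [CompleteSpace Y]
    {D : X →L[ℝ] Y} (hker : FiniteDimensional ℝ (LinearMap.ker (D : X →ₗ[ℝ] Y)))
    (hcoker : (LinearMap.range (D : X →ₗ[ℝ] Y)).CoFG) : IsFredholm D :=
  ⟨D.isClosed_range_of_cofg hcoker, hker, hcoker⟩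

theorem IsFredholm.comp [CompleteSpace X] [CompleteSpace Z] {g : Y →L[ℝ] Z} {f : X →L[ℝ] Y}
    (hg : IsFredholm g) (hf : IsFredholm f) : IsFredholm (g.comp f) :=
  .of_finiteDimensional_ker_of_cofg
    (.of_fg <| LinearMap.ker_comp_fg (Module.Finite.iff_fg.mp hf.2.1)
      (Module.Finite.iff_fg.mp hg.2.1))
    (LinearMap.range_comp_cofg hf.2.2 hg.2.2)

theorem isFredholm_subtypeL {S : Submodule ℝ X} (hclosed : IsClosed (S : Set X))
    (hcofg : S.CoFG) :
    IsFredholm S.subtypeL := by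
  refine ⟨?_, ?_, ?_⟩ <;> rw [Submodule.toLinearMap_subtypeL]
  · rwa [Submodule.range_subtype]
  · rw [Submodule.ker_subtype]
    infer_instance
  · rwa [Submodule.range_subtype]

theorem IsFredholm.prodMap {X₁ X₂ Y₁ Y₂ : Type*}
    [NormedAddCommGroup X₁] [NormedSpace ℝ X₁] [NormedAddCommGroup X₂] [NormedSpace ℝ X₂]
    [NormedAddCommGroup Y₁] [NormedSpace ℝ Y₁] [NormedAddCommGroup Y₂] [NormedSpace ℝ Y₂]
    {D₁ : X₁ →L[ℝ] Y₁} {D₂ : X₂ →L[ℝ] Y₂} (h₁ : IsFredholm D₁) (h₂ : IsFredholm D₂) :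
    IsFredholm (D₁.prodMap D₂) := by
  obtain ⟨hclosed₁, hker₁, hcoker₁⟩ := h₁
  obtain ⟨hclosed₂, hker₂, hcoker₂⟩ := h₂
  have hrange : LinearMap.range (D₁.prodMap D₂ : X₁ × X₂ →ₗ[ℝ] Y₁ × Y₂) =
      (LinearMap.range (D₁ : X₁ →ₗ[ℝ] Y₁)).prod (LinearMap.range (D₂ : X₂ →ₗ[ℝ] Y₂)) := by
    rw [ContinuousLinearMap.coe_prodMap, LinearMap.range_prodMap]
  have hker : LinearMap.ker (D₁.prodMap D₂ : X₁ × X₂ →ₗ[ℝ] Y₁ × Y₂) =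
      (LinearMap.ker (D₁ : X₁ →ₗ[ℝ] Y₁)).prod (LinearMap.ker (D₂ : X₂ →ₗ[ℝ] Y₂)) := by
    rw [ContinuousLinearMap.coe_prodMap, LinearMap.ker_prodMap]
  refine ⟨?_, ?_, ?_⟩
  · rw [hrange, Submodule.prod_coe]
    exact hclosed₁.prod hclosed₂
  · rw [hker, LinearMap.prod_eq_sup_map]
    infer_instance
  · rw [hrange]
    exact Submodule.CoFG.prod hcoker₁ hcoker₂

end Fredholm

/-- If `D₁ : X₁ → Y₁`, `D₂ : X₂ → Y₂` are Fredholm, `V` is finite-dimensional, and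
`e₁ : X₁ → V`, `e₂ : X₂ → V` are bounded linear, then the restriction of `D₁ × D₂` to
`X = {(ξ₁, ξ₂) : e₁ξ₁ = e₂ξ₂}` is Fredholm. -/
theorem stmt18 {X₁ X₂ Y₁ Y₂ V : Type*}
    [NormedAddCommGroup X₁] [NormedSpace ℝ X₁] [CompleteSpace X₁]
    [NormedAddCommGroup X₂] [NormedSpace ℝ X₂] [CompleteSpace X₂]
    [NormedAddCommGroup Y₁] [NormedSpace ℝ Y₁] [CompleteSpace Y₁]
    [NormedAddCommGroup Y₂] [NormedSpace ℝ Y₂] [CompleteSpace Y₂]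
    [NormedAddCommGroup V] [NormedSpace ℝ V] [FiniteDimensional ℝ V]
    (D₁ : X₁ →L[ℝ] Y₁) (D₂ : X₂ →L[ℝ] Y₂)
    (hD₁ : IsFredholm D₁) (hD₂ : IsFredholm D₂)
    (e₁ : X₁ →L[ℝ] V) (e₂ : X₂ →L[ℝ] V) :
    IsFredholm
      (((D₁.prodMap D₂).comp
        (LinearMap.ker (((e₁.comp (ContinuousLinearMap.fst ℝ X₁ X₂) -
          e₂.comp (ContinuousLinearMap.snd ℝ X₁ X₂) : X₁ × X₂ →L[ℝ] V) : X₁ × X₂ →ₗ[ℝ] V))).subtypeL)) := by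
  set E : X₁ × X₂ →L[ℝ] V :=
    e₁.comp (ContinuousLinearMap.fst ℝ X₁ X₂) - e₂.comp (ContinuousLinearMap.snd ℝ X₁ X₂)
  have hclosed : IsClosed (LinearMap.ker (E : X₁ × X₂ →ₗ[ℝ] V) : Set (X₁ × X₂)) := E.isClosed_ker
  have : CompleteSpace (LinearMap.ker (E : X₁ × X₂ →ₗ[ℝ] V)) := hclosed.completeSpace_coe
  exact (hD₁.prodMap hD₂).comp (isFredholm_subtypeL hclosed (.ker _))
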